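/- Let B, B_ref ∈ ℝ^{d×r}, A, A_ref ∈ ℝ^{r×d}, and let R ∈ ℝ^{r×r} be orthogonal. Define the aligned factor B̃ = B R. Let τ, κ, λ, η, G_B ≥ 0 and δ_A > 0, and assume: (i) ‖B‖_F ≤ √τ; (ii) ‖R − I‖_F ≤ 2κλ‖A − A_ref‖_F; (iii) ‖B − B_ref‖_F ≤ η G_B; and (iv) ‖A − A_ref‖_F ≥ δ_A. Then ‖B̃ − B_ref‖_F² ≤ ‖B − B_ref‖_F² + ( 4τκ²λ² + (4/δ_A)√τ κ λ η G_B ) · ‖A − A_ref‖_F². -/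
import Mathlib

open scoped BigOperators
open Matrix

/-- Frobenius norm of a real matrix. -/
noncomputable def frob {m n : Type*} [Fintype m] [Fintype n] (M : Matrix m n ℝ) : ℝ :=
  Real.sqrt (∑ i, ∑ j, (M i j) ^ 2)

attribute [local instance] Matrix.frobeniusSeminormedAddCommGroup

lemma frob_eq_norm {m n : Type*} [Fintype m] [Fintype n] (M : Matrix m n ℝ) :
    frob M = ‖M‖ := by
  rw [frob, Matrix.frobenius_norm_def, Real.sqrt_eq_rpow]
  congr 1
  refine Finset.sum_congr rfl fun i _ => Finset.sum_congr rfl fun j _ => ?_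
  rw [Real.norm_eq_abs, Real.rpow_two, sq_abs]

/-- bound on the deviation of the aligned factor `B̃ = BR` from the
reference:
`‖B̃ − B_ref‖_F² ≤ ‖B − B_ref‖_F² + (4τκ²λ² + (4/δ_A)√τ κλη G_B)·‖A − A_ref‖_F²`. -/
theorem aligned_factor_bound (d r : ℕ)
    (B Bref : Matrix (Fin d) (Fin r) ℝ) (A Aref : Matrix (Fin r) (Fin d) ℝ)
    (R : Matrix (Fin r) (Fin r) ℝ) (hR : Rᵀ * R = 1)
    (τ κ lam η GB δA : ℝ)
    (hτ : 0 ≤ τ) (hκ : 0 ≤ κ) (hlam : 0 ≤ lam) (hη : 0 ≤ η) (hGB : 0 ≤ GB) (hδA : 0 < δA)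
    (hB : frob B ≤ Real.sqrt τ)
    (hRI : frob (R - 1) ≤ 2 * κ * lam * frob (A - Aref))
    (hBref : frob (B - Bref) ≤ η * GB)
    (hA : δA ≤ frob (A - Aref)) :
    frob (B * R - Bref) ^ 2
      ≤ frob (B - Bref) ^ 2
        + (4 * τ * κ ^ 2 * lam ^ 2 + (4 / δA) * Real.sqrt τ * κ * lam * η * GB)
          * frob (A - Aref) ^ 2 := by
  simp only [frob_eq_norm] at *
  set t := ‖A - Aref‖ with ht
  set a := ‖B - Bref‖ with ha
  set b := ‖B * (R - 1)‖ with hb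
  have ht0 : (0:ℝ) < t := lt_of_lt_of_le hδA hA
  have h1 : ‖B * R - Bref‖ ≤ a + b := by
    have hdecomp : B * R - Bref = (B - Bref) + B * (R - 1) := by
      rw [Matrix.mul_sub, Matrix.mul_one]; abel
    rw [hdecomp]; exact norm_add_le _ _
  have hX0 : (0:ℝ) ≤ Real.sqrt τ * (2 * κ * lam * t) := by positivity
  have hbX : b ≤ Real.sqrt τ * (2 * κ * lam * t) :=
    le_trans (Matrix.frobenius_norm_mul B (R - 1))
      (mul_le_mul hB hRI (norm_nonneg _) (Real.sqrt_nonneg τ))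
  have hb0 : (0:ℝ) ≤ b := norm_nonneg _
  have ha0 : (0:ℝ) ≤ a := norm_nonneg _
  have hsq : Real.sqrt τ ^ 2 = τ := Real.sq_sqrt hτ
  have hsqrt0 : (0:ℝ) ≤ Real.sqrt τ := Real.sqrt_nonneg τ
  -- square the triangle inequality
  have h2 : ‖B * R - Bref‖ ^ 2 ≤ (a + b) ^ 2 := by
    have := pow_le_pow_left₀ (norm_nonneg _) h1 2
    exact this
  -- bound on b^2
  have hb2 : b ^ 2 ≤ 4 * τ * κ ^ 2 * lam ^ 2 * t ^ 2 := by
    calc b ^ 2 ≤ (Real.sqrt τ * (2 * κ * lam * t)) ^ 2 := pow_le_pow_left₀ hb0 hbX 2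
      _ = 4 * τ * κ ^ 2 * lam ^ 2 * t ^ 2 := by rw [mul_pow, hsq]; ring
  -- bound on 2ab
  have hab : a * b ≤ (η * GB) * (Real.sqrt τ * (2 * κ * lam * t)) :=
    mul_le_mul hBref hbX hb0 (by positivity)
  have hcross : 2 * (a * b) ≤ (4 / δA) * Real.sqrt τ * κ * lam * η * GB * t ^ 2 := by
    have htt : t ≤ t ^ 2 / δA := by
      rw [le_div_iff₀ hδA]
      nlinarith
    have hc0 : (0:ℝ) ≤ 4 * Real.sqrt τ * κ * lam * η * GB := by positivity
    have h3 : 2 * (a * b) ≤ 4 * Real.sqrt τ * κ * lam * η * GB * t := by nlinarith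
    have h4 : 4 * Real.sqrt τ * κ * lam * η * GB * t
        ≤ 4 * Real.sqrt τ * κ * lam * η * GB * (t ^ 2 / δA) :=
      mul_le_mul_of_nonneg_left htt hc0
    have h5 : 4 * Real.sqrt τ * κ * lam * η * GB * (t ^ 2 / δA)
        = (4 / δA) * Real.sqrt τ * κ * lam * η * GB * t ^ 2 := by
      field_simp
    linarith [h3, h4.trans_eq h5]
  have hexp : (a + b) ^ 2 = a ^ 2 + 2 * (a * b) + b ^ 2 := by ring
  linarith [h2, hb2, hcross]
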